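/- arXiv:2107.11927 — 2 statements merged into one kernel-verified Lean document; each statement's English description precedes it below -/
import Mathlib

section
/- The average participation solution AP satisfies invariance and validity: for every monotone game u, (i) AP_i(u) = 0 for every agent i with u(S ∪ {i}) = u(S) for every S ⊆ N, and (ii) ∑_{i ∈ N} AP_i(u) ≤ u(N). -/
open Finset
open scoped Classical

/-- A monotone game on agent set `Fin n`: `u ∅ = 0` and `u` is monotone w.r.t. inclusion. -/
def IsMonotoneGame (n : ℕ) (u : Finset (Fin n) → ℝ) : Prop :=
  u ∅ = 0 ∧ ∀ S T : Finset (Fin n), S ⊆ T → u S ≤ u T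

/-- The contribution indicator: `c(u,i) = 0` if `u (S ∪ {i}) = u S` for every `S`,
and `c(u,i) = 1` otherwise. -/
noncomputable def contrib {n : ℕ} (u : Finset (Fin n) → ℝ) (i : Fin n) : ℝ :=
  if ∀ S : Finset (Fin n), u (insert i S) = u S then 0 else 1

/-- The average participation solution
`AP_i(u) = ∑_{S ⊆ N \ {i}} w ⬝ (c(u,i) / (∑_{j ∈ S} c(u,j) + 1)) ⬝ u (S ∪ {i})`,
where `w = 1 / (2 ^ n - 1)`. -/
noncomputable def AP {n : ℕ} (u : Finset (Fin n) → ℝ) (i : Fin n) : ℝ :=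
  ∑ S ∈ (Finset.univ.erase i).powerset,
    (1 / (2 ^ n - 1 : ℝ)) * (contrib u i / ((∑ j ∈ S, contrib u j) + 1)) * u (insert i S)

lemma contrib_mem {n : ℕ} (u : Finset (Fin n) → ℝ) (i : Fin n) :
    contrib u i = 0 ∨ contrib u i = 1 := by
  unfold contrib; split <;> simp

lemma contrib_nonneg {n : ℕ} (u : Finset (Fin n) → ℝ) (i : Fin n) : 0 ≤ contrib u i := by
  rcases contrib_mem u i with h | h <;> simp [h]

lemma inner_le_one {n : ℕ} (u : Finset (Fin n) → ℝ) (T : Finset (Fin n)) :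
    ∑ i ∈ T, contrib u i / ((∑ j ∈ T.erase i, contrib u j) + 1) ≤ 1 := by
  set c := contrib u with hc
  set k := ∑ j ∈ T, c j with hk
  have hterm : ∀ i ∈ T, c i / ((∑ j ∈ T.erase i, c j) + 1) = c i / k := by
    intro i hi
    rcases contrib_mem u i with h0 | h1
    · rw [← hc] at h0; simp [h0]
    · rw [← hc] at h1
      have he : ∑ j ∈ T.erase i, c j = k - c i := by
        rw [hk, Finset.sum_erase_eq_sub hi]
      rw [he, h1]; ring_nf
  rw [Finset.sum_congr rfl hterm, ← Finset.sum_div, ← hk]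
  rcases eq_or_ne k 0 with h | h
  · simp [h]
  · rw [div_self h]

/-- The average participation solution satisfies invariance and validity on monotone games. -/
theorem ap_invariance_validity (n : ℕ) (hn : 1 ≤ n)
    (u : Finset (Fin n) → ℝ) (hu : IsMonotoneGame n u) :
    (∀ i : Fin n, (∀ S : Finset (Fin n), u (insert i S) = u S) → AP u i = 0) ∧
    (∑ i, AP u i ≤ u Finset.univ) := by
  obtain ⟨h0, hmono⟩ := hu
  have hcz : ∀ i, (∀ S : Finset (Fin n), u (insert i S) = u S) → contrib u i = 0 := by
    intro i h; simp [contrib, h]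
  constructor
  · intro i h
    unfold AP
    apply Finset.sum_eq_zero
    intro S _
    rw [hcz i h]; simp
  · -- validity
    set w : ℝ := 1 / (2 ^ n - 1 : ℝ) with hw
    have h2 : (0:ℝ) < 2 ^ n - 1 := by
      have : (2:ℝ)^1 ≤ 2^n := by
        apply pow_le_pow_right₀ (by norm_num) hn
      simp at this; linarith
    have hwpos : 0 < w := by positivity
    have hunn : ∀ T : Finset (Fin n), 0 ≤ u T := by
      intro T; rw [← h0]; exact hmono _ _ (Finset.empty_subset T)
    -- reindex each AP sum
    have reidx : ∀ i : Fin n, AP u i =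
        ∑ T ∈ Finset.univ.powerset.filter (fun T => i ∈ T),
          w * (contrib u i / ((∑ j ∈ T.erase i, contrib u j) + 1)) * u T := by
      intro i
      unfold AP
      rw [← hw]
      refine Finset.sum_nbij' (fun S => insert i S) (fun T => T.erase i) ?_ ?_ ?_ ?_ ?_
      · intro S hS
        simp only [Finset.mem_powerset] at hS
        simp only [Finset.mem_filter, Finset.mem_powerset]
        exact ⟨Finset.subset_univ _, Finset.mem_insert_self i S⟩
      · intro T hT
        simp only [Finset.mem_filter, Finset.mem_powerset] at hT
        simp only [Finset.mem_powerset]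
        exact Finset.erase_subset_erase i (Finset.subset_univ T)
      · intro S hS
        simp only [Finset.mem_powerset] at hS
        have : i ∉ S := fun h => (Finset.mem_erase.mp (hS h)).1 rfl
        exact Finset.erase_insert this
      · intro T hT
        simp only [Finset.mem_filter, Finset.mem_powerset] at hT
        exact Finset.insert_erase hT.2
      · intro S hS
        simp only [Finset.mem_powerset] at hS
        have : i ∉ S := fun h => (Finset.mem_erase.mp (hS h)).1 rfl
        rw [Finset.erase_insert this]
    calc ∑ i, AP u i
        = ∑ T ∈ Finset.univ.powerset, ∑ i ∈ T,
            w * (contrib u i / ((∑ j ∈ T.erase i, contrib u j) + 1)) * u T := by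
          simp_rw [reidx, Finset.sum_filter]
          rw [Finset.sum_comm]
          refine Finset.sum_congr rfl fun T _ => ?_
          rw [Finset.sum_ite_mem, Finset.univ_inter]
      _ = ∑ T ∈ Finset.univ.powerset.erase ∅, ∑ i ∈ T,
            w * (contrib u i / ((∑ j ∈ T.erase i, contrib u j) + 1)) * u T := by
          rw [Finset.sum_erase]
          simp
      _ ≤ ∑ T ∈ Finset.univ.powerset.erase ∅, w * u Finset.univ := by
          refine Finset.sum_le_sum fun T _ => ?_
          have key : ∑ i ∈ T,
              w * (contrib u i / ((∑ j ∈ T.erase i, contrib u j) + 1)) * u T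
              = w * u T * ∑ i ∈ T, contrib u i / ((∑ j ∈ T.erase i, contrib u j) + 1) := by
            rw [Finset.mul_sum]; exact Finset.sum_congr rfl fun i _ => by ring
          rw [key]
          have h1 := inner_le_one u T
          have hinn : 0 ≤ ∑ i ∈ T, contrib u i / ((∑ j ∈ T.erase i, contrib u j) + 1) := by
            apply Finset.sum_nonneg
            intro i hi
            apply div_nonneg (contrib_nonneg u i)
            have : 0 ≤ ∑ j ∈ T.erase i, contrib u j :=
              Finset.sum_nonneg fun j _ => contrib_nonneg u j
            linarith
          calc w * u T * ∑ i ∈ T, contrib u i / ((∑ j ∈ T.erase i, contrib u j) + 1)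
              ≤ w * u T * 1 := by
                apply mul_le_mul_of_nonneg_left h1
                exact mul_nonneg (le_of_lt hwpos) (hunn T)
            _ = w * u T := by ring
            _ ≤ w * u Finset.univ :=
                mul_le_mul_of_nonneg_left (hmono _ _ (Finset.subset_univ T)) (le_of_lt hwpos)
      _ ≤ u Finset.univ := by
          have hcard : (Finset.univ.powerset.erase (∅ : Finset (Fin n))).card = 2 ^ n - 1 := by
            rw [Finset.card_erase_of_mem (Finset.empty_mem_powerset _), Finset.card_powerset,
              Finset.card_univ, Fintype.card_fin]
          rw [Finset.sum_const, hcard, nsmul_eq_mul, hw]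
          have h1n : (1:ℕ) ≤ 2 ^ n := Nat.one_le_two_pow
          rw [Nat.cast_sub h1n]
          push_cast
          rw [← mul_assoc, mul_one_div, div_self (ne_of_gt h2), one_mul]
end

section
/- Let ψ be a solution on the class of monotone games satisfying AE (average efficiency), S (symmetry), I (invariance), cParM (c-participation monotonicity) and RcParM (relative c-participation monotonicity). Let u be a monotone game, ε > 0, C₁ = {i ∈ N : c(u, i) = 1}, and let u^ε be the perturbed game defined by u^ε(S) = u(S) + ε if S ∩ C₁ ≠ ∅ and u^ε(S) = u(S) otherwise. If ψ(u^ε) = AP(u^ε), then ψ(u) = AP(u), where AP is the average participation solution. -/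
open Finset
open scoped Classical

/-- The set `C₁` of agents with contribution indicator `1`. -/
noncomputable def C1 {n : ℕ} (u : Finset (Fin n) → ℝ) : Finset (Fin n) :=
  Finset.univ.filter fun i => contrib u i = 1

/-- The perturbed game `u^ε`: `u^ε S = u S + ε` if `S ∩ C₁ ≠ ∅`, and `u^ε S = u S`
otherwise. -/
noncomputable def perturb {n : ℕ} (u : Finset (Fin n) → ℝ) (ε : ℝ) :
    Finset (Fin n) → ℝ :=
  fun S => if (S ∩ C1 u).Nonempty then u S + ε else u S

/-!
Perturbing `u` by `ε` leaves every contribution indicator unchanged and adds `ε` to the worth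
`u (S ∪ {i})` of every coalition containing a contributing agent `i`. Hence `AP_i` grows by
`ε * apWeight u i`, a weight which is the same for all contributing agents (swapping two of them
permutes the coalitions without changing their contribution counts), while RcParM forces
`ψ_i` to grow by the same amount for all contributing agents. So `ψ u - AP u` is constant on
`C₁`; it vanishes off `C₁` by I, and it sums to zero because both `ψ` and `AP` are average
efficient. Hence it vanishes everywhere.
-/

section General

variable {α : Type*} [Fintype α] [DecidableEq α]

theorem Finset.sum_sum_powerset_univ_erase {M : Type*} [AddCommMonoid M]
    (f : α → Finset α → M) :
    ∑ i, ∑ S ∈ (univ.erase i).powerset, f i S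
      = ∑ T ∈ (univ : Finset α).powerset, ∑ i ∈ T, f i (T.erase i) := by
  calc ∑ i, ∑ S ∈ (univ.erase i).powerset, f i S
      = ∑ i, ∑ T ∈ univ.powerset.filter (i ∈ ·), f i (T.erase i) := by
        refine sum_congr rfl fun i _ => sum_nbij' (insert i) (·.erase i) ?_ ?_ ?_ ?_ ?_ <;>
          intro S hS <;> simp_all [subset_erase]
    _ = ∑ T ∈ (univ : Finset α).powerset, ∑ i ∈ T, f i (T.erase i) :=
        sum_comm' fun i T => by simp

theorem Finset.sum_powerset_univ_erase_eq_of_eq {M β : Type*} [AddCommMonoid M]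
    [AddCommMonoid β] (c : α → M) (g : M → β) {i k : α} (hik : c i = c k) :
    ∑ S ∈ (univ.erase i).powerset, g (∑ j ∈ S, c j)
      = ∑ S ∈ (univ.erase k).powerset, g (∑ j ∈ S, c j) := by
  have hc : ∀ j, c (Equiv.swap i k j) = c j := fun j => by
    rw [Equiv.swap_apply_def]; split_ifs <;> simp_all
  refine sum_equiv (Equiv.swap i k).finsetCongr (fun S => ?_) (fun S _ => ?_)
  · simp [subset_erase, Equiv.finsetCongr_apply]
  · simp [Equiv.finsetCongr_apply, hc]

end General

theorem sum_div_sum_erase_add_one {α : Type*} [DecidableEq α] {c : α → ℝ} {T : Finset α}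
    (hc : ∀ j ∈ T, c j = 0 ∨ c j = 1) (hT : ∃ i ∈ T, c i = 1) :
    ∑ i ∈ T, c i / (∑ j ∈ T.erase i, c j + 1) = 1 := by
  obtain ⟨i₀, hi₀, hci₀⟩ := hT
  have hpos : 0 < ∑ j ∈ T, c j :=
    sum_pos' (fun j hj => by rcases hc j hj with h | h <;> simp [h]) ⟨i₀, hi₀, by simp [hci₀]⟩
  calc ∑ i ∈ T, c i / (∑ j ∈ T.erase i, c j + 1)
      = ∑ i ∈ T, c i / ∑ j ∈ T, c j := sum_congr rfl fun i hi => by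
        rcases hc i hi with h | h
        · simp [h]
        · rw [← add_sum_erase T c hi, h, add_comm]
    _ = 1 := by rw [← sum_div, div_self hpos.ne']

theorem eq_zero_of_sum_eq_zero_of_eqOn {α M : Type*} [Fintype α] [AddCommMonoid M]
    [IsAddTorsionFree M] {d : α → M} {s : Finset α} {i : α} (hi : i ∈ s)
    (hs : ∀ k ∈ s, d k = d i) (hsc : ∀ k ∉ s, d k = 0) (hsum : ∑ k, d k = 0) : d i = 0 := by
  rw [← sum_subset (subset_univ s) fun k _ hk => hsc k hk, sum_congr rfl hs, sum_const]
    at hsum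
  exact (nsmul_eq_zero_iff_right (card_ne_zero_of_mem hi)).1 hsum

section Game

variable {n : ℕ}

theorem contrib_eq_zero_iff (u : Finset (Fin n) → ℝ) (i : Fin n) :
    contrib u i = 0 ↔ ∀ S, u (insert i S) = u S := by
  unfold contrib; split_ifs <;> simp_all

theorem contrib_eq_one_iff (u : Finset (Fin n) → ℝ) (i : Fin n) :
    contrib u i = 1 ↔ ∃ S, u (insert i S) ≠ u S := by
  unfold contrib; split_ifs <;> simp_all

theorem contrib_eq_zero_or_one (u : Finset (Fin n) → ℝ) (i : Fin n) :
    contrib u i = 0 ∨ contrib u i = 1 := by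
  unfold contrib; split_ifs <;> simp

theorem mem_C1 {u : Finset (Fin n) → ℝ} {i : Fin n} : i ∈ C1 u ↔ contrib u i = 1 := by
  simp [C1]

theorem eq_zero_of_forall_contrib_eq_zero {u : Finset (Fin n) → ℝ} (hu : u ∅ = 0)
    {T : Finset (Fin n)} (hT : ∀ j ∈ T, contrib u j = 0) : u T = 0 := by
  induction T using Finset.induction_on with
  | empty => exact hu
  | insert a T _ ih =>
    rw [(contrib_eq_zero_iff u a).1 (hT a (mem_insert_self a T)) T]
    exact ih fun j hj => hT j (mem_insert_of_mem hj)

theorem AP_eq_zero_of_contrib_eq_zero {u : Finset (Fin n) → ℝ} {i : Fin n}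
    (hi : contrib u i = 0) : AP u i = 0 :=
  sum_eq_zero fun S _ => by simp [hi]

theorem sum_contrib_div_mul {u : Finset (Fin n) → ℝ} (hu : u ∅ = 0) (T : Finset (Fin n)) :
    ∑ i ∈ T, contrib u i / (∑ j ∈ T.erase i, contrib u j + 1) * u T = u T := by
  by_cases hT : ∃ i ∈ T, contrib u i = 1
  · rw [← sum_mul, sum_div_sum_erase_add_one (fun j _ => contrib_eq_zero_or_one u j) hT,
      one_mul]
  · push Not at hT
    have hzero : u T = 0 := eq_zero_of_forall_contrib_eq_zero hu fun j hj =>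
      (contrib_eq_zero_or_one u j).resolve_right (hT j hj)
    simp [hzero]

theorem sum_AP {u : Finset (Fin n) → ℝ} (hu : u ∅ = 0) :
    ∑ i, AP u i = 1 / (2 ^ n - 1 : ℝ) * ∑ S ∈ (univ : Finset (Fin n)).powerset, u S := by
  simp only [AP, sum_sum_powerset_univ_erase, mul_sum]
  refine sum_congr rfl fun T _ => ?_
  conv_rhs => rw [← sum_contrib_div_mul hu T, mul_sum]
  exact sum_congr rfl fun i hi => by rw [insert_erase hi, mul_assoc]

end Game

section Perturb

variable {n : ℕ} {u : Finset (Fin n) → ℝ} {ε : ℝ}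

theorem perturb_insert_of_contrib_eq_one {i : Fin n} (hi : contrib u i = 1)
    (S : Finset (Fin n)) : perturb u ε (insert i S) = u (insert i S) + ε :=
  if_pos ⟨i, mem_inter.2 ⟨mem_insert_self i S, mem_C1.2 hi⟩⟩

theorem IsMonotoneGame.perturb (hu : IsMonotoneGame n u) (hε : 0 ≤ ε) :
    IsMonotoneGame n (perturb u ε) := by
  refine ⟨by simp [_root_.perturb, hu.1], fun S T hST => ?_⟩
  have hle := hu.2 S T hST
  have hmono : (S ∩ C1 u).Nonempty → (T ∩ C1 u).Nonempty :=
    (·.mono (inter_subset_inter_right hST))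
  unfold _root_.perturb
  split_ifs <;> first | linarith | tauto

theorem contrib_perturb (hu : IsMonotoneGame n u) (hε : 0 ≤ ε) (j : Fin n) :
    contrib (perturb u ε) j = contrib u j := by
  rcases contrib_eq_zero_or_one u j with hj | hj
  · have hjC : j ∉ C1 u := by simp [mem_C1, hj]
    rw [hj, contrib_eq_zero_iff]
    intro S
    simp only [perturb, insert_inter_of_notMem hjC, (contrib_eq_zero_iff u j).1 hj S]
  · obtain ⟨S, hS⟩ := (contrib_eq_one_iff u j).1 hj
    refine hj ▸ (contrib_eq_one_iff _ j).2 ⟨S, fun heq => hS ?_⟩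
    have hle := hu.2 S (insert j S) (subset_insert j S)
    rw [perturb_insert_of_contrib_eq_one hj] at heq
    unfold perturb at heq
    split_ifs at heq <;> linarith

end Perturb

section Solution

variable {n : ℕ}

noncomputable def apWeight (u : Finset (Fin n) → ℝ) (i : Fin n) : ℝ :=
  ∑ S ∈ (univ.erase i).powerset,
    1 / (2 ^ n - 1 : ℝ) * (contrib u i / (∑ j ∈ S, contrib u j + 1))

theorem apWeight_eq_of_contrib_eq (u : Finset (Fin n) → ℝ) {i k : Fin n}
    (hik : contrib u i = contrib u k) : apWeight u i = apWeight u k := by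
  unfold apWeight
  rw [hik]
  exact sum_powerset_univ_erase_eq_of_eq (contrib u)
    (fun x => 1 / (2 ^ n - 1 : ℝ) * (contrib u k / (x + 1))) hik

theorem AP_perturb {u : Finset (Fin n) → ℝ} (hu : IsMonotoneGame n u) {ε : ℝ} (hε : 0 ≤ ε)
    {i : Fin n} (hi : contrib u i = 1) :
    AP (perturb u ε) i = AP u i + ε * apWeight u i := by
  simp only [AP, apWeight, contrib_perturb hu hε, perturb_insert_of_contrib_eq_one hi, mul_sum,
    ← sum_add_distrib]
  exact sum_congr rfl fun S _ => by ring

/-- The axiom RcParM. -/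
def RelParticipationMonotone (ψ : (Finset (Fin n) → ℝ) → Fin n → ℝ) : Prop :=
  ∀ u v, IsMonotoneGame n u → IsMonotoneGame n v →
    (∀ j : Fin n, contrib u j = contrib v j) → ∀ i k : Fin n,
    contrib u i = contrib u k →
    (∀ S : Finset (Fin n), i ∉ S → k ∉ S →
      u (insert i S) - v (insert i S) ≥ u (insert k S) - v (insert k S)) →
    ψ u i - ψ v i ≥ ψ u k - ψ v k

theorem RelParticipationMonotone.sub_eq {ψ : (Finset (Fin n) → ℝ) → Fin n → ℝ}
    (hψ : RelParticipationMonotone ψ) {u v : Finset (Fin n) → ℝ} (hu : IsMonotoneGame n u)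
    (hv : IsMonotoneGame n v) (huv : ∀ j, contrib u j = contrib v j) {i k : Fin n}
    (hik : contrib u i = contrib u k)
    (h : ∀ S, i ∉ S → k ∉ S →
      u (insert i S) - v (insert i S) = u (insert k S) - v (insert k S)) :
    ψ u i - ψ v i = ψ u k - ψ v k :=
  le_antisymm (hψ u v hu hv huv k i hik.symm fun S hk hi => (h S hi hk).le)
    (hψ u v hu hv huv i k hik fun S hi hk => (h S hi hk).ge)

theorem sub_AP_eq_of_perturb {ψ : (Finset (Fin n) → ℝ) → Fin n → ℝ}
    (hψ : RelParticipationMonotone ψ) {u : Finset (Fin n) → ℝ} (hu : IsMonotoneGame n u)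
    {ε : ℝ} (hε : 0 ≤ ε) (hperturb : ∀ i, ψ (perturb u ε) i = AP (perturb u ε) i)
    {i k : Fin n} (hi : contrib u i = 1) (hk : contrib u k = 1) :
    ψ u i - AP u i = ψ u k - AP u k := by
  have hψ_diff : ψ (perturb u ε) i - ψ u i = ψ (perturb u ε) k - ψ u k :=
    hψ.sub_eq (hu.perturb hε) hu (contrib_perturb hu hε)
      (by rw [contrib_perturb hu hε, contrib_perturb hu hε, hi, hk]) fun S _ _ => by
      rw [perturb_insert_of_contrib_eq_one hi, perturb_insert_of_contrib_eq_one hk]; ring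
  have hAP_diff := AP_perturb hu hε hi
  rw [apWeight_eq_of_contrib_eq u (hi.trans hk.symm)] at hAP_diff
  linarith [hperturb i, hperturb k, AP_perturb hu hε hk]

end Solution

theorem psi_eq_ap_of_perturb_general (n : ℕ)
    (ψ : (Finset (Fin n) → ℝ) → Fin n → ℝ)
    (hAE : ∀ u, IsMonotoneGame n u →
      ∑ i, ψ u i =
        (1 / (2 ^ n - 1 : ℝ)) * ∑ S ∈ (Finset.univ : Finset (Fin n)).powerset, u S)
    (hI : ∀ u, IsMonotoneGame n u → ∀ i : Fin n, contrib u i = 0 → ψ u i = 0)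
    (hRcParM : ∀ u v, IsMonotoneGame n u → IsMonotoneGame n v →
      (∀ j : Fin n, contrib u j = contrib v j) → ∀ i k : Fin n,
      contrib u i = contrib u k →
      (∀ S : Finset (Fin n), i ∉ S → k ∉ S →
        u (insert i S) - v (insert i S) ≥ u (insert k S) - v (insert k S)) →
      ψ u i - ψ v i ≥ ψ u k - ψ v k)
    (u : Finset (Fin n) → ℝ) (hu : IsMonotoneGame n u) (ε : ℝ) (hε : 0 < ε)
    (hperturb : ∀ i : Fin n, ψ (perturb u ε) i = AP (perturb u ε) i) :
    ∀ i : Fin n, ψ u i = AP u i := by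
  intro i
  have hnull : ∀ k ∉ C1 u, ψ u k - AP u k = 0 := fun k hk => by
    have hk0 := (contrib_eq_zero_or_one u k).resolve_right (mt mem_C1.2 hk)
    rw [hI u hu k hk0, AP_eq_zero_of_contrib_eq_zero hk0, sub_self]
  by_cases hi : i ∈ C1 u
  · have hconst : ∀ k ∈ C1 u, ψ u k - AP u k = ψ u i - AP u i := fun k hk =>
      sub_AP_eq_of_perturb hRcParM hu hε.le hperturb (mem_C1.1 hk) (mem_C1.1 hi)
    have hsum : ∑ k, (ψ u k - AP u k) = 0 := by
      rw [sum_sub_distrib, hAE u hu, sum_AP hu.1, sub_self]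
    exact sub_eq_zero.1 (eq_zero_of_sum_eq_zero_of_eqOn (d := fun k => ψ u k - AP u k) hi hconst
      hnull hsum)
  · exact sub_eq_zero.1 (hnull i hi)

/-- If ψ satisfies AE, S, I, cParM and RcParM, and ψ agrees with AP on the perturbed
game `u^ε`, then ψ agrees with AP on `u`. -/
theorem psi_eq_ap_of_perturb (n : ℕ) (hn : 1 ≤ n)
    (ψ : (Finset (Fin n) → ℝ) → Fin n → ℝ)
    (hAE : ∀ u, IsMonotoneGame n u →
      ∑ i, ψ u i =
        (1 / (2 ^ n - 1 : ℝ)) * ∑ S ∈ (Finset.univ : Finset (Fin n)).powerset, u S)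
    (hS : ∀ u, IsMonotoneGame n u → ∀ i j : Fin n,
      (∀ S : Finset (Fin n), i ∉ S → j ∉ S → u (insert i S) = u (insert j S)) →
      ψ u i = ψ u j)
    (hI : ∀ u, IsMonotoneGame n u → ∀ i : Fin n, contrib u i = 0 → ψ u i = 0)
    (hcParM : ∀ u v, IsMonotoneGame n u → IsMonotoneGame n v →
      (∀ j : Fin n, contrib u j = contrib v j) → ∀ i : Fin n,
      (∀ S : Finset (Fin n), u (insert i S) ≥ v (insert i S)) → ψ u i ≥ ψ v i)
    (hRcParM : ∀ u v, IsMonotoneGame n u → IsMonotoneGame n v →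
      (∀ j : Fin n, contrib u j = contrib v j) → ∀ i k : Fin n,
      contrib u i = contrib u k →
      (∀ S : Finset (Fin n), i ∉ S → k ∉ S →
        u (insert i S) - v (insert i S) ≥ u (insert k S) - v (insert k S)) →
      ψ u i - ψ v i ≥ ψ u k - ψ v k)
    (u : Finset (Fin n) → ℝ) (hu : IsMonotoneGame n u) (ε : ℝ) (hε : 0 < ε)
    (hperturb : ∀ i : Fin n, ψ (perturb u ε) i = AP (perturb u ε) i) :
    ∀ i : Fin n, ψ u i = AP u i :=
  psi_eq_ap_of_perturb_general n ψ hAE hI hRcParM u hu ε hε hperturb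
end
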